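/- Let n ∈ ℕ with n ≥ 2, let 1 ≤ k ≤ n, let p* ∈ [0,1] be a maximizer of ψ_{n,k} on [0,1], let β ∈ (0,1], and set t := max(p*, β). Then the probability measure P := (1 - β/t) δ_0 + (β/t) δ_t on [0,1] has mean β and satisfies ∫_{[0,1]} B_{n,s}({k,…,n}) dP(s) = f_{n,k}(β). -/

import Mathlib

open MeasureTheory

/-- Binomial upper tail `B_{n,p}({k,…,n})`. -/
noncomputable def binTail (n k : ℕ) (p : ℝ) : ℝ :=
  ∑ j ∈ Finset.Icc k n, (n.choose j : ℝ) * p ^ j * (1 - p) ^ (n - j)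

/-- `ψ_{n,k}(p) = p⁻¹ B_{n,p}({k,…,n})`, extended continuously at `0`. -/
noncomputable def psi (n k : ℕ) (p : ℝ) : ℝ :=
  if p = 0 then (if k = 1 then (n : ℝ) else 0) else p⁻¹ * binTail n k p

/-- `f_{n,k}(u) = u ⋅ sup_{p ∈ [u,1]} ψ_{n,k}(p)`. -/
noncomputable def fnk (n k : ℕ) (u : ℝ) : ℝ := u * sSup (psi n k '' Set.Icc u 1)

/-!
Write `B := binTail n k`. Then `ψ` is the slope of `B` at `0`, its derivative is
`ψ' = (B' - ψ) / p`, and `B'(p) = n C(n-1,k-1) p^(k-1) (1-p)^(n-k)` is log-concave, hence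
quasiconcave, on `[0,1]`. So `B' = ψ` at interior local minima of `ψ`, and `ψ ≤ B'` at a point
that maximizes `ψ` on an interval ending there. If `ψ` increased somewhere to the right of the
maximizer `p*`, the minimum of `ψ` between `p*` and a maximizer further right would lie below
both end values, which quasiconcavity of `B'` forbids. Hence `ψ` is antitone on `[p*, 1]`, the
supremum defining `f_{n,k}(β)` is `ψ(t)`, and `f_{n,k}(β) = (β/t) B(t)` is the integral of `B`
against the two-point measure because `B(0) = 0`.
-/

open Polynomial Set

theorem derivative_sum_bernsteinPolynomial_Icc (R : Type*) [CommRing R] (n l : ℕ) :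
    derivative (∑ ν ∈ Finset.Icc (l + 1) n, bernsteinPolynomial R n ν) =
      n * bernsteinPolynomial R (n - 1) l := by
  rw [← Finset.Ico_add_one_right_eq_Icc, Finset.sum_Ico_eq_sum_range, map_sum]
  simp_rw [add_right_comm l 1, bernsteinPolynomial.derivative_succ, ← Finset.mul_sum]
  have htel := Finset.sum_range_sub' (fun i => bernsteinPolynomial R (n - 1) (l + i))
    (n + 1 - (l + 1))
  simp only [← add_assoc, add_zero] at htel
  rw [htel]
  rcases n with _ | n
  · simp
  · rw [bernsteinPolynomial.eq_zero_of_lt R (by omega : n + 1 - 1 < l + (n + 1 + 1 - (l + 1))),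
      sub_zero]

theorem IsMaxOn.nonneg_of_hasDerivAt_Icc_right {f : ℝ → ℝ} {a b f' : ℝ}
    (hmax : IsMaxOn f (Icc a b) b) (hab : a < b) (hf : HasDerivAt f f' b) : 0 ≤ f' := by
  have hmul : (a - b) * f' ≤ 0 := by
    simpa using hmax.localize.hasFDerivWithinAt_nonpos hf.hasFDerivAt.hasFDerivWithinAt
      (sub_mem_posTangentConeAt_of_segment_subset (segment_symm ℝ a b ▸ segment_subset_Icc hab.le))
  exact nonneg_of_mul_nonpos_right hmul (sub_neg.2 hab)

theorem Real.min_le_rpow_mul_rpow {u v w₁ w₂ : ℝ} (hu : 0 ≤ u) (hv : 0 ≤ v) (hw₁ : 0 ≤ w₁)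
    (hw₂ : 0 ≤ w₂) (hw : w₁ + w₂ = 1) : min u v ≤ u ^ w₁ * v ^ w₂ :=
  calc min u v = min u v ^ w₁ * min u v ^ w₂ := by
        rw [← Real.rpow_add' (le_min hu hv) (by rw [hw]; exact one_ne_zero), hw, Real.rpow_one]
    _ ≤ u ^ w₁ * v ^ w₂ := by gcongr <;> simp

theorem quasiconcaveOn_pow_mul_one_sub_pow (a b : ℕ) :
    QuasiconcaveOn ℝ (Icc 0 1) (fun p : ℝ => p ^ a * (1 - p) ^ b) := by
  refine quasiconcaveOn_iff_min_le.2 ⟨convex_Icc 0 1, fun x hx z hz w₁ w₂ hw₁ hw₂ hw => ?_⟩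
  obtain ⟨hx₀, hx₁⟩ := hx
  obtain ⟨hz₀, hz₁⟩ := hz
  have hx' : 0 ≤ 1 - x := by linarith
  have hz' : 0 ≤ 1 - z := by linarith
  calc min (x ^ a * (1 - x) ^ b) (z ^ a * (1 - z) ^ b)
      ≤ (x ^ a * (1 - x) ^ b) ^ w₁ * (z ^ a * (1 - z) ^ b) ^ w₂ :=
        Real.min_le_rpow_mul_rpow (by positivity) (by positivity) hw₁ hw₂ hw
    _ = (x ^ w₁ * z ^ w₂) ^ a * ((1 - x) ^ w₁ * (1 - z) ^ w₂) ^ b := by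
        rw [Real.mul_rpow (by positivity) (by positivity),
          Real.mul_rpow (by positivity) (by positivity),
          ← Real.rpow_pow_comm hx₀, ← Real.rpow_pow_comm hz₀, ← Real.rpow_pow_comm hx',
          ← Real.rpow_pow_comm hz']
        ring
    _ ≤ (w₁ • x + w₂ • z) ^ a * (1 - (w₁ • x + w₂ • z)) ^ b := by
        have hmean : 1 - (w₁ • x + w₂ • z) = w₁ * (1 - x) + w₂ * (1 - z) := by
          simp only [smul_eq_mul]; linear_combination -hw
        rw [hmean, smul_eq_mul, smul_eq_mul]
        have hp := Real.geom_mean_le_arith_mean2_weighted hw₁ hw₂ hx₀ hz₀ hw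
        have hq := Real.geom_mean_le_arith_mean2_weighted hw₁ hw₂ hx' hz' hw
        exact mul_le_mul (pow_le_pow_left₀ (by positivity) hp a)
          (pow_le_pow_left₀ (by positivity) hq b) (by positivity) (by positivity)

theorem min_le_of_quasiconcaveOn_of_isLocalMin {f g : ℝ → ℝ} {x z y : ℝ}
    (hf : ContinuousOn f (Icc x z)) (hg : QuasiconcaveOn ℝ (Icc x z) g)
    (hx : f x ≤ g x) (hz : f z ≤ g z) (hmin : ∀ c ∈ Ioo x z, IsLocalMin f c → g c ≤ f c)
    (hy : y ∈ Icc x z) : min (f x) (f z) ≤ f y := by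
  have hxz : x ≤ z := hy.1.trans hy.2
  obtain ⟨m, hm, hmy⟩ := isCompact_Icc.exists_isMinOn (nonempty_Icc.2 hxz) hf
  refine le_trans ?_ (hmy hy)
  rcases hm.1.eq_or_lt with rfl | hxm
  · exact min_le_left _ _
  rcases hm.2.eq_or_lt with rfl | hmz
  · exact min_le_right _ _
  calc min (f x) (f z) ≤ min (g x) (g z) := min_le_min hx hz
    _ ≤ g m := ((hg _).ordConnected.out ⟨left_mem_Icc.2 hxz, min_le_left _ _⟩
        ⟨right_mem_Icc.2 hxz, min_le_right _ _⟩ ⟨hxm.le, hmz.le⟩).2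
    _ ≤ f m := hmin m ⟨hxm, hmz⟩ (hmy.localize.isLocalMin (Icc_mem_nhds hxm hmz))

noncomputable def binTailDeriv (n k : ℕ) (p : ℝ) : ℝ :=
  n * (n - 1).choose (k - 1) * (p ^ (k - 1) * (1 - p) ^ (n - k))

theorem binTail_eq_eval (n k : ℕ) (p : ℝ) :
    binTail n k p = (∑ j ∈ Finset.Icc k n, bernsteinPolynomial ℝ n j).eval p := by
  simp [binTail, bernsteinPolynomial, mul_assoc, eval_finsetSum]

theorem continuous_binTail (n k : ℕ) : Continuous (binTail n k) := by
  rw [funext (binTail_eq_eval n k)]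
  exact Polynomial.continuous _

theorem hasDerivAt_binTail {n k : ℕ} (hk : 1 ≤ k) (p : ℝ) :
    HasDerivAt (binTail n k) (binTailDeriv n k p) p := by
  obtain ⟨l, rfl⟩ : ∃ l, k = l + 1 := ⟨k - 1, by omega⟩
  rw [funext (binTail_eq_eval n (l + 1))]
  refine ((∑ j ∈ Finset.Icc (l + 1) n, bernsteinPolynomial ℝ n j).hasDerivAt p).congr_deriv ?_
  rw [derivative_sum_bernsteinPolynomial_Icc]
  simp [binTailDeriv, bernsteinPolynomial, show n - 1 - l = n - (l + 1) by omega, mul_assoc]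

theorem binTail_zero {n k : ℕ} (hk : 1 ≤ k) : binTail n k 0 = 0 :=
  Finset.sum_eq_zero fun j hj => by
    rw [zero_pow (by have := (Finset.mem_Icc.1 hj).1; omega), mul_zero, zero_mul]

theorem psi_of_ne_zero (n k : ℕ) {p : ℝ} (hp : p ≠ 0) : psi n k p = p⁻¹ * binTail n k p :=
  if_neg hp

theorem psi_zero {n k : ℕ} (hk : 1 ≤ k) : psi n k 0 = binTailDeriv n k 0 := by
  rcases hk.eq_or_lt with rfl | hk
  · simp [psi, binTailDeriv]
  · simp [psi, binTailDeriv, hk.ne', zero_pow (show k - 1 ≠ 0 by omega)]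

theorem psi_eq_dslope {n k : ℕ} (hk : 1 ≤ k) : psi n k = dslope (binTail n k) 0 := by
  funext p
  rcases eq_or_ne p 0 with rfl | hp
  · rw [dslope_same, (hasDerivAt_binTail hk 0).deriv, psi_zero hk]
  · rw [dslope_of_ne _ hp, slope_def_field, binTail_zero hk, psi_of_ne_zero n k hp]
    simp [div_eq_inv_mul]

theorem continuous_psi {n k : ℕ} (hk : 1 ≤ k) : Continuous (psi n k) := by
  rw [psi_eq_dslope hk, ← continuousOn_univ, continuousOn_dslope Filter.univ_mem]
  exact ⟨(continuous_binTail n k).continuousOn, (hasDerivAt_binTail hk 0).differentiableAt⟩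

theorem hasDerivAt_psi {n k : ℕ} (hk : 1 ≤ k) {p : ℝ} (hp : p ≠ 0) :
    HasDerivAt (psi n k) (p⁻¹ * (binTailDeriv n k p - psi n k p)) p := by
  have hquot := (hasDerivAt_inv hp).mul (hasDerivAt_binTail (n := n) hk p)
  have heq : psi n k =ᶠ[nhds p] (fun q => q⁻¹) * binTail n k := by
    filter_upwards [isOpen_ne.mem_nhds hp] with q hq
    exact psi_of_ne_zero n k hq
  refine (hquot.congr_of_eventuallyEq heq).congr_deriv ?_
  rw [psi_of_ne_zero n k hp]
  field_simp
  ring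

theorem binTailDeriv_le_psi_of_isLocalMin {n k : ℕ} (hk : 1 ≤ k) {p : ℝ} (hp : p ≠ 0)
    (hmin : IsLocalMin (psi n k) p) : binTailDeriv n k p ≤ psi n k p := by
  have := hmin.hasDerivAt_eq_zero (hasDerivAt_psi hk hp)
  rw [mul_eq_zero, sub_eq_zero] at this
  exact (this.resolve_left (inv_ne_zero hp)).le

theorem psi_le_binTailDeriv_of_isMaxOn {n k : ℕ} (hk : 1 ≤ k) {a p : ℝ}
    (hmax : IsMaxOn (psi n k) (Icc a p) p) (hap : a < p) (hp : 0 < p) :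
    psi n k p ≤ binTailDeriv n k p := by
  have := hmax.nonneg_of_hasDerivAt_Icc_right hap (hasDerivAt_psi hk hp.ne')
  exact sub_nonneg.1 ((mul_nonneg_iff_of_pos_left (inv_pos.2 hp)).1 this)

theorem quasiconcaveOn_binTailDeriv (n k : ℕ) : QuasiconcaveOn ℝ (Icc 0 1) (binTailDeriv n k) :=
  (quasiconcaveOn_pow_mul_one_sub_pow (k - 1) (n - k)).monotone_comp
    (monotone_mul_left_of_nonneg (by positivity))

theorem antitoneOn_psi_of_isMaxOn {n k : ℕ} (hk : 1 ≤ k) {pstar : ℝ} (hpstar : pstar ∈ Icc 0 1)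
    (hmax : IsMaxOn (psi n k) (Icc 0 1) pstar) : AntitoneOn (psi n k) (Icc pstar 1) := by
  intro β hβ q hq hβq
  by_contra! hlt
  have hψ := continuous_psi (n := n) hk
  obtain ⟨qs, hqs, hqs_max⟩ :=
    isCompact_Icc.exists_isMaxOn (nonempty_Icc.2 hβ.2) hψ.continuousOn
  have hq_qs : psi n k q ≤ psi n k qs := hqs_max ⟨hβq, hq.2⟩
  have hβqs : β < qs := hqs.1.lt_of_ne (by rintro rfl; linarith)
  have hq_pstar : psi n k q ≤ psi n k pstar := hmax ⟨hpstar.1.trans hq.1, hq.2⟩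
  have hpstar_le : psi n k pstar ≤ binTailDeriv n k pstar := by
    rcases hpstar.1.eq_or_lt with h0 | hpos
    · rw [← h0, psi_zero hk]
    · exact psi_le_binTailDeriv_of_isMaxOn hk (hmax.on_subset (Icc_subset_Icc_right hpstar.2))
        hpos hpos
  have hqs_le : psi n k qs ≤ binTailDeriv n k qs :=
    psi_le_binTailDeriv_of_isMaxOn hk (hqs_max.on_subset (Icc_subset_Icc_right hqs.2)) hβqs
      (hpstar.1.trans_lt (hβ.1.trans_lt hβqs))
  have hmin := min_le_of_quasiconcaveOn_of_isLocalMin hψ.continuousOn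
    ((convex_Icc _ _).quasiconcaveOn_restrict (quasiconcaveOn_binTailDeriv n k)
      (Icc_subset_Icc hpstar.1 hqs.2))
    hpstar_le hqs_le
    (fun c hc hloc => binTailDeriv_le_psi_of_isLocalMin hk (hpstar.1.trans_lt hc.1).ne' hloc)
    ⟨hβ.1, hβqs.le⟩
  rcases min_le_iff.1 hmin with h | h <;> linarith

theorem fnk_eq_mul_psi_max {n k : ℕ} (hk : 1 ≤ k) {pstar : ℝ} (hpstar : pstar ∈ Icc 0 1)
    (hmax : IsMaxOn (psi n k) (Icc 0 1) pstar) {β : ℝ} (hβ : β ∈ Icc 0 1) :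
    fnk n k β = β * psi n k (max pstar β) := by
  have hmem : max pstar β ∈ Icc β 1 := ⟨le_max_right _ _, max_le hpstar.2 hβ.2⟩
  refine congrArg (β * ·) (IsGreatest.csSup_eq ⟨mem_image_of_mem _ hmem, ?_⟩)
  rintro _ ⟨p, hp, rfl⟩
  rcases le_total pstar β with h | h
  · rw [max_eq_right h]
    exact antitoneOn_psi_of_isMaxOn hk hpstar hmax ⟨h, hβ.2⟩ ⟨h.trans hp.1, hp.2⟩ hp.1
  · rw [max_eq_left h]
    exact hmax ⟨hβ.1.trans hp.1, hp.2⟩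

theorem isProbabilityMeasure_twoPoint {α : Type*} [MeasurableSpace α] {w : ℝ} (hw : w ∈ Icc 0 1)
    (x y : α) :
    IsProbabilityMeasure
      (ENNReal.ofReal (1 - w) • Measure.dirac x + ENNReal.ofReal w • Measure.dirac y) := by
  constructor
  simp only [Measure.add_apply, Measure.smul_apply, smul_eq_mul, measure_univ, mul_one]
  rw [← ENNReal.ofReal_add (sub_nonneg.2 hw.2) hw.1, sub_add_cancel, ENNReal.ofReal_one]

theorem integral_twoPoint {α E : Type*} [MeasurableSpace α] [MeasurableSingletonClass α]
    [NormedAddCommGroup E] [NormedSpace ℝ E] [CompleteSpace E] (f : α → E) {a b : ℝ} (ha : 0 ≤ a)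
    (hb : 0 ≤ b) (x y : α) :
    ∫ s, f s ∂(ENNReal.ofReal a • Measure.dirac x + ENNReal.ofReal b • Measure.dirac y) =
      a • f x + b • f y := by
  rw [integral_add_measure ((integrable_dirac enorm_lt_top).smul_measure ENNReal.ofReal_ne_top)
      ((integrable_dirac enorm_lt_top).smul_measure ENNReal.ofReal_ne_top),
    integral_smul_measure, integral_smul_measure, integral_dirac, integral_dirac,
    ENNReal.toReal_ofReal ha, ENNReal.toReal_ofReal hb]

theorem two_point_attains_fnk_general (n k : ℕ) (hk1 : 1 ≤ k)
    (pstar : ℝ) (hpstar : pstar ∈ Set.Icc (0:ℝ) 1)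
    (hmax : ∀ p ∈ Set.Icc (0:ℝ) 1, psi n k p ≤ psi n k pstar)
    (β : ℝ) (hβ : β ∈ Set.Ioc (0:ℝ) 1) :
    IsProbabilityMeasure
      (ENNReal.ofReal (1 - β / max pstar β) • Measure.dirac (0:ℝ)
        + ENNReal.ofReal (β / max pstar β) • Measure.dirac (max pstar β)) ∧
    (∫ s, s ∂(ENNReal.ofReal (1 - β / max pstar β) • Measure.dirac (0:ℝ)
        + ENNReal.ofReal (β / max pstar β) • Measure.dirac (max pstar β))) = β ∧
    (∫ s, binTail n k s ∂(ENNReal.ofReal (1 - β / max pstar β) • Measure.dirac (0:ℝ)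
        + ENNReal.ofReal (β / max pstar β) • Measure.dirac (max pstar β))) = fnk n k β := by
  have ht : 0 < max pstar β := lt_max_of_lt_right hβ.1
  have hw : β / max pstar β ∈ Icc 0 1 :=
    ⟨div_nonneg hβ.1.le ht.le, div_le_one_of_le₀ (le_max_right _ _) ht.le⟩
  refine ⟨isProbabilityMeasure_twoPoint hw _ _, ?_, ?_⟩
  · rw [integral_twoPoint _ (sub_nonneg.2 hw.2) hw.1, smul_zero, zero_add, smul_eq_mul,
      div_mul_cancel₀ _ ht.ne']
  · rw [integral_twoPoint _ (sub_nonneg.2 hw.2) hw.1, binTail_zero hk1, smul_zero, zero_add,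
      fnk_eq_mul_psi_max hk1 hpstar (isMaxOn_iff.2 hmax) (Ioc_subset_Icc_self hβ),
      psi_of_ne_zero n k ht.ne', smul_eq_mul]
    field_simp

/-- For `n ≥ 2`, a maximizer `p*` of `ψ_{n,k}`, `β ∈ (0,1]` and `t := max(p*, β)`,
the two-point measure `(1 - β/t) δ₀ + (β/t) δ_t` is a probability measure with mean `β`
whose integral of the binomial tail equals `f_{n,k}(β)`. -/
theorem two_point_attains_fnk (n k : ℕ) (hn : 2 ≤ n) (hk1 : 1 ≤ k) (hkn : k ≤ n)
    (pstar : ℝ) (hpstar : pstar ∈ Set.Icc (0:ℝ) 1)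
    (hmax : ∀ p ∈ Set.Icc (0:ℝ) 1, psi n k p ≤ psi n k pstar)
    (β : ℝ) (hβ : β ∈ Set.Ioc (0:ℝ) 1) :
    IsProbabilityMeasure
      (ENNReal.ofReal (1 - β / max pstar β) • Measure.dirac (0:ℝ)
        + ENNReal.ofReal (β / max pstar β) • Measure.dirac (max pstar β)) ∧
    (∫ s, s ∂(ENNReal.ofReal (1 - β / max pstar β) • Measure.dirac (0:ℝ)
        + ENNReal.ofReal (β / max pstar β) • Measure.dirac (max pstar β))) = β ∧
    (∫ s, binTail n k s ∂(ENNReal.ofReal (1 - β / max pstar β) • Measure.dirac (0:ℝ)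
        + ENNReal.ofReal (β / max pstar β) • Measure.dirac (max pstar β))) = fnk n k β :=
  two_point_attains_fnk_general n k hk1 pstar hpstar hmax β hβ
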